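/- arXiv:math/0402397 — 3 statements merged into one kernel-verified Lean document; each statement's English description precedes it below -/
import Mathlib

section
/- Let w ∈ S_n with w ≠ w_0, and let r = min{ i : w_i < w_{i+1} }. Then every rc-graph R for w s_r contains the cross (r, w_r), and R \ {(r, w_r)} is an rc-graph for w (here w s_r denotes w composed with the adjacent transposition s_r, and l(w s_r) = l(w) + 1). -/
/-- The adjacent transposition `s_a = (a, a+1)`, as a permutation of `ℕ` (we use the
letters `1, …, n-1`, permutations act on `{1, …, n}`). -/
def sTrans (a : ℕ) : Equiv.Perm ℕ := Equiv.swap a (a + 1)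

/-- The product `s_{a_1} s_{a_2} ⋯` of a word. -/
def wordProd (L : List ℕ) : Equiv.Perm ℕ := (L.map sTrans).prod

/-- `L` is a reduced word for `w`: a word in the letters `a ≥ 1` whose product of adjacent
transpositions is `w`, of minimal possible length. -/
def IsReducedWordFor (w : Equiv.Perm ℕ) (L : List ℕ) : Prop :=
  (∀ a ∈ L, 1 ≤ a) ∧ wordProd L = w ∧
    ∀ M : List ℕ, (∀ a ∈ M, 1 ≤ a) → wordProd M = w → L.length ≤ M.length

/-- `w` is a permutation of `{1, …, n}`: it fixes everything outside this interval. -/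
def IsPermOn (n : ℕ) (w : Equiv.Perm ℕ) : Prop :=
  ∀ i : ℕ, w i ≠ i → 1 ≤ i ∧ i ≤ n

/-- The strict linear order on crosses: `(i,j) < (i',j')` iff `i < i'`, or `i = i'` and
`j > j'`. -/
def rcLT (p q : ℕ × ℕ) : Prop := p.1 < q.1 ∨ (p.1 = q.1 ∧ q.2 < p.2)

/-- `L` is the listing of the finite set `R` in increasing `rcLT`-order. -/
def IsRCReading (R : Finset (ℕ × ℕ)) (L : List (ℕ × ℕ)) : Prop :=
  L.toFinset = R ∧ L.Chain' rcLT

/-- The word `a_1 a_2 ⋯` with `a_k = i_k + j_k - 1` read off a listing of crosses. -/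
def rcWord (L : List (ℕ × ℕ)) : List ℕ := L.map (fun p => p.1 + p.2 - 1)

/-- `R` is an rc-graph for `w ∈ Sₙ`: a subset of `{(i,j) : i,j ≥ 1, i+j ≤ n}` whose reading
word (in the prescribed linear order) is a reduced word for `w`. -/
def IsRCGraph (n : ℕ) (w : Equiv.Perm ℕ) (R : Finset (ℕ × ℕ)) : Prop :=
  (∀ p ∈ R, 1 ≤ p.1 ∧ 1 ≤ p.2 ∧ p.1 + p.2 ≤ n) ∧
    ∀ L : List (ℕ × ℕ), IsRCReading R L → IsReducedWordFor w (rcWord L)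

/-- The code of `w`: `c_i = #{ j : j > i ∧ w_j < w_i }`. -/
def permCode (n : ℕ) (w : Equiv.Perm ℕ) (i : ℕ) : ℕ :=
  ((Finset.Icc 1 n).filter (fun j => i < j ∧ w j < w i)).card

/-- The bottom rc-graph `R_bot(w) = { (i,j) : 1 ≤ j ≤ c_i(w) }`. -/
def Rbot (n : ℕ) (w : Equiv.Perm ℕ) : Finset (ℕ × ℕ) :=
  ((Finset.Icc 1 n) ×ˢ (Finset.Icc 1 n)).filter (fun p => p.2 ≤ permCode n w p.1)

namespace Aux16

lemma sTrans_left (a : ℕ) : sTrans a a = a + 1 := Equiv.swap_apply_left _ _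
lemma sTrans_right (a : ℕ) : sTrans a (a+1) = a := Equiv.swap_apply_right _ _
lemma sTrans_ne {a x : ℕ} (h1 : x ≠ a) (h2 : x ≠ a + 1) : sTrans a x = x :=
  Equiv.swap_apply_of_ne_of_ne h1 h2
lemma sTrans_lt {a x : ℕ} (h : x < a) : sTrans a x = x :=
  sTrans_ne (by omega) (by omega)
lemma sTrans_le {a x c : ℕ} (ha : a + 1 ≤ c) (hx : x ≤ c) : sTrans a x ≤ c := by
  rcases eq_or_ne x a with rfl | h1
  · rw [sTrans_left]; omega
  rcases eq_or_ne x (a+1) with rfl | h2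
  · rw [sTrans_right]; omega
  · rw [sTrans_ne h1 h2]; exact hx

lemma wordProd_nil : wordProd [] = 1 := rfl
lemma wordProd_cons (a : ℕ) (l : List ℕ) : wordProd (a :: l) = sTrans a * wordProd l := by
  simp [wordProd]
lemma wordProd_append (l₁ l₂ : List ℕ) : wordProd (l₁ ++ l₂) = wordProd l₁ * wordProd l₂ := by
  simp [wordProd]

lemma wordProd_fix {A : List ℕ} {x : ℕ} (h : ∀ a ∈ A, x < a) : wordProd A x = x := by
  induction A with
  | nil => rfl
  | cons a l ih =>
      rw [wordProd_cons, Equiv.Perm.mul_apply, ih (fun b hb => h b (List.mem_cons_of_mem _ hb)),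
        sTrans_lt (h a (List.mem_cons_self))]

lemma wordProd_le {A : List ℕ} {c x : ℕ} (h : ∀ a ∈ A, a + 1 ≤ c) (hx : x ≤ c) :
    wordProd A x ≤ c := by
  induction A generalizing x with
  | nil => exact hx
  | cons a l ih =>
      rw [wordProd_cons, Equiv.Perm.mul_apply]
      exact sTrans_le (h a (List.mem_cons_self))
        (ih (fun b hb => h b (List.mem_cons_of_mem _ hb)) hx)

/-- suffix product of the word `A` starting at position `k`. -/
def suf (A : List ℕ) (k : ℕ) : Equiv.Perm ℕ := wordProd (A.drop k)

lemma suf_zero (A : List ℕ) : suf A 0 = wordProd A := rfl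

lemma suf_ge {A : List ℕ} {k : ℕ} (h : A.length ≤ k) : suf A k = 1 := by
  unfold suf
  rw [List.drop_eq_nil_of_le h, wordProd_nil]

lemma suf_succ {A : List ℕ} {k : ℕ} (h : k < A.length) :
    suf A k = sTrans (A.getD k 0) * suf A (k+1) := by
  unfold suf
  rw [List.drop_eq_getElem_cons h, wordProd_cons, List.getD_eq_getElem _ _ h]

/-- `k` is a crossing ("event") of the pair `(p,q)` : just before (in suffix order)
position `k`, the two strands `p`, `q` carry the values `a_k`, `a_k+1`. -/
def EvAt (A : List ℕ) (k p q : ℕ) : Prop :=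
  k < A.length ∧ suf A (k+1) p = A.getD k 0 ∧ suf A (k+1) q = A.getD k 0 + 1

lemma EvAt.ne {A : List ℕ} {k p q : ℕ} (e : EvAt A k p q) : p ≠ q := by
  intro h; subst h
  have := e.2.1.symm.trans e.2.2
  omega

lemma flip_event {A : List ℕ} {k p q : ℕ}
    (h1 : suf A (k+1) p < suf A (k+1) q) (h2 : ¬ suf A k p < suf A k q) :
    EvAt A k p q := by
  have hk : k < A.length := by
    by_contra hk
    push_neg at hk
    rw [suf_ge (hk.trans (Nat.le_succ k))] at h1
    rw [suf_ge hk] at h2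
    exact h2 h1
  set a := A.getD k 0 with ha
  have hstep : ∀ x, suf A k x = sTrans a (suf A (k+1) x) := by
    intro x; rw [suf_succ hk, Equiv.Perm.mul_apply]
  rw [hstep p, hstep q] at h2
  set x := suf A (k+1) p with hx
  set y := suf A (k+1) q with hy
  refine ⟨hk, ?_⟩
  rcases eq_or_ne x a with hxa | hxa
  · rcases eq_or_ne y (a+1) with hya | hya
    · exact ⟨hxa, hya⟩
    · exfalso
      have hyy : sTrans a y = y := sTrans_ne (by omega) hya
      rw [hxa, sTrans_left, hyy] at h2
      omega
  · exfalso
    rcases eq_or_ne x (a+1) with hxa1 | hxa1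
    · have hy2 : a + 1 < y := by omega
      rw [hxa1, sTrans_right, sTrans_ne (by omega) (by omega)] at h2
      omega
    · rw [sTrans_ne hxa hxa1] at h2
      rcases eq_or_ne y a with hya | hya
      · rw [hya, sTrans_left] at h2; omega
      · rcases eq_or_ne y (a+1) with hya1 | hya1
        · rw [hya1, sTrans_right] at h2; omega
        · rw [sTrans_ne hya hya1] at h2; omega

lemma event_flip {A : List ℕ} {k p q : ℕ} (e : EvAt A k p q) :
    suf A k p = A.getD k 0 + 1 ∧ suf A k q = A.getD k 0 := by
  obtain ⟨hk, h1, h2⟩ := e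
  constructor
  · rw [suf_succ hk, Equiv.Perm.mul_apply, h1, sTrans_left]
  · rw [suf_succ hk, Equiv.Perm.mul_apply, h2, sTrans_right]

lemma event_swap {A : List ℕ} {k p q : ℕ} (e : EvAt A k p q) :
    sTrans (A.getD k 0) * suf A (k+1) = suf A (k+1) * Equiv.swap p q := by
  obtain ⟨hk, h1, h2⟩ := e
  have hpq : p ≠ q := by intro h; subst h; omega
  ext x
  simp only [Equiv.Perm.mul_apply]
  rcases eq_or_ne x p with rfl | hxp
  · rw [Equiv.swap_apply_left, h2, h1, sTrans_left]
  rcases eq_or_ne x q with rfl | hxq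
  · rw [Equiv.swap_apply_right, h1, h2, sTrans_right]
  · rw [Equiv.swap_apply_of_ne_of_ne hxp hxq]
    exact sTrans_ne (fun h => hxp ((suf A (k+1)).injective (h.trans h1.symm)))
      (fun h => hxq ((suf A (k+1)).injective (h.trans h2.symm)))

lemma wordProd_eraseIdx {A : List ℕ} {k : ℕ} (hk : k < A.length) {τ : Equiv.Perm ℕ}
    (hτ : τ * τ = 1)
    (h : sTrans (A.getD k 0) * suf A (k+1) = suf A (k+1) * τ) :
    wordProd (A.eraseIdx k) = wordProd A * τ := by
  have hA : A.take k ++ A.getD k 0 :: A.drop (k+1) = A := by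
    rw [List.getD_eq_getElem _ _ hk, ← List.drop_eq_getElem_cons hk, List.take_append_drop]
  rw [List.eraseIdx_eq_take_drop_succ]
  conv_rhs => rw [← hA]
  rw [wordProd_append, wordProd_append, wordProd_cons]
  have : sTrans (A.getD k 0) * wordProd (A.drop (k+1)) = wordProd (A.drop (k+1)) * τ := h
  rw [this, mul_assoc, mul_assoc, hτ, mul_one]

lemma exists_event {A : List ℕ} {p q : ℕ} :
    ∀ {k₂ k₁ : ℕ}, k₁ ≤ k₂ → suf A k₂ p < suf A k₂ q → ¬ suf A k₁ p < suf A k₁ q →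
      ∃ k, k₁ ≤ k ∧ k < k₂ ∧ EvAt A k p q := by
  intro k₂
  induction k₂ with
  | zero =>
      intro k₁ h hasc hdesc
      interval_cases k₁
      exact absurd hasc hdesc
  | succ K ih =>
      intro k₁ h hasc hdesc
      rcases eq_or_lt_of_le h with rfl | hlt
      · exact absurd hasc hdesc
      · have h' : k₁ ≤ K := by omega
        by_cases hK : suf A K p < suf A K q
        · obtain ⟨k, hk1, hk2, he⟩ := ih h' hK hdesc
          exact ⟨k, hk1, by omega, he⟩
        · exact ⟨K, h', by omega, flip_event hasc hK⟩

end Aux16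

namespace Aux16

lemma drop_eraseIdx' (A : List ℕ) (j k : ℕ) (h : j ≤ k) (hk : k < A.length) :
    (A.eraseIdx k).drop j = (A.drop j).eraseIdx (k - j) := by
  rw [List.eraseIdx_eq_take_drop_succ, List.eraseIdx_eq_take_drop_succ,
    List.drop_append_of_le_length (by simp; omega), List.drop_take, List.drop_drop]
  congr 2
  omega

lemma getD_drop' (A : List ℕ) (j i : ℕ) (h : j + i < A.length) :
    (A.drop j).getD i 0 = A.getD (j + i) 0 := by
  rw [List.getD_eq_getElem _ _ (by simp; omega), List.getD_eq_getElem _ _ h, List.getElem_drop]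

lemma length_eraseIdx' (A : List ℕ) (k : ℕ) (h : k < A.length) :
    (A.eraseIdx k).length = A.length - 1 := by
  rw [List.length_eraseIdx]; simp [h]

lemma getD_eraseIdx' (A : List ℕ) (k j : ℕ) (hjk : j < k) (hk : k < A.length) :
    (A.eraseIdx k).getD j 0 = A.getD j 0 := by
  rw [List.eraseIdx_eq_take_drop_succ, List.getD_eq_getElem _ _ (by simp; omega),
    List.getD_eq_getElem _ _ (by omega), List.getElem_append_left (by simp; omega)]
  simp [List.getElem_take]

/-- An unoriented crossing of the pair `{p,q}`. -/
def EvAt' (A : List ℕ) (k p q : ℕ) : Prop := EvAt A k p q ∨ EvAt A k q p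

lemma EvAt'.swap_eq {A : List ℕ} {k p q : ℕ} (e : EvAt' A k p q) :
    sTrans (A.getD k 0) * suf A (k+1) = suf A (k+1) * Equiv.swap p q := by
  rcases e with e | e
  · exact event_swap e
  · rw [Equiv.swap_comm]; exact event_swap e

lemma EvAt'.lt {A : List ℕ} {k p q : ℕ} (e : EvAt' A k p q) : k < A.length := by
  rcases e with e | e <;> exact e.1

lemma EvAt'.ne {A : List ℕ} {k p q : ℕ} (e : EvAt' A k p q) : p ≠ q := by
  rcases e with e | e
  · exact e.ne
  · exact e.ne.symm

lemma no_double_event {v : Equiv.Perm ℕ} {A : List ℕ} (hred : IsReducedWordFor v A)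
    {p q k₂ k₁ : ℕ} (hlt : k₂ < k₁)
    (e₂ : EvAt' A k₂ p q) (e₁ : EvAt' A k₁ p q) : False := by
  set τ := Equiv.swap p q with hτdef
  have hτ : τ * τ = 1 := Equiv.swap_mul_self p q
  have hk₁ : k₁ < A.length := e₁.lt
  have hk₂ : k₂ < A.length := e₂.lt
  have h₁ := e₁.swap_eq
  have h₂ := e₂.swap_eq
  set A' := A.eraseIdx k₁ with hA'
  have hlen' : A'.length = A.length - 1 := length_eraseIdx' A k₁ hk₁
  have w1 : wordProd A' = wordProd A * τ := wordProd_eraseIdx hk₁ hτ h₁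
  -- the suffix of `A'` from `k₂+1`
  have hdropA' : A'.drop (k₂+1) = (A.drop (k₂+1)).eraseIdx (k₁ - (k₂+1)) :=
    drop_eraseIdx' A (k₂+1) k₁ (by omega) hk₁
  have hsufA' : suf A' (k₂+1) = suf A (k₂+1) * τ := by
    have hB : (A.drop (k₂+1)).length = A.length - (k₂+1) := List.length_drop
    have hiB : k₁ - (k₂+1) < (A.drop (k₂+1)).length := by omega
    have hgB : (A.drop (k₂+1)).getD (k₁ - (k₂+1)) 0 = A.getD k₁ 0 := by
      rw [getD_drop' A (k₂+1) (k₁ - (k₂+1)) (by omega)]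
      congr 1
      omega
    have hsB : suf (A.drop (k₂+1)) ((k₁ - (k₂+1)) + 1) = suf A (k₁+1) := by
      unfold suf
      rw [List.drop_drop]
      have hh : k₂ + 1 + (k₁ - (k₂ + 1) + 1) = k₁+1 := by omega
      rw [hh]
    have := wordProd_eraseIdx (A := A.drop (k₂+1)) (k := k₁ - (k₂+1)) hiB hτ
      (by rw [hgB, hsB]; exact h₁)
    show suf A' (k₂+1) = _
    unfold suf
    rw [hdropA', this]
  have hget' : A'.getD k₂ 0 = A.getD k₂ 0 := getD_eraseIdx' A k₁ k₂ hlt hk₁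
  have hsw' : sTrans (A'.getD k₂ 0) * suf A' (k₂+1) = suf A' (k₂+1) * τ := by
    rw [hget', hsufA', ← mul_assoc, h₂]
  have w2 : wordProd (A'.eraseIdx k₂) = wordProd A := by
    rw [wordProd_eraseIdx (by omega) hτ hsw', w1, mul_assoc, hτ, mul_one]
  have hsubset : ∀ a ∈ A'.eraseIdx k₂, a ∈ A := by
    intro a ha
    exact (List.eraseIdx_sublist A k₁).subset ((List.eraseIdx_sublist A' k₂).subset ha)
  have hmin := hred.2.2 (A'.eraseIdx k₂) (fun a ha => hred.1 a (hsubset a ha))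
    (by rw [w2, hred.2.1])
  rw [length_eraseIdx' A' k₂ (by omega), hlen'] at hmin
  omega

end Aux16

namespace Aux16

/-- the reflexive closure of `rcLT`. -/
def rcLE (p q : ℕ × ℕ) : Prop := p.1 < q.1 ∨ (p.1 = q.1 ∧ q.2 ≤ p.2)

lemma rcLT_iff {p q : ℕ × ℕ} : rcLT p q ↔ rcLE p q ∧ p ≠ q := by
  unfold rcLT rcLE
  constructor
  · rintro (h | ⟨h1, h2⟩)
    · exact ⟨Or.inl h, fun he => by rw [he] at h; omega⟩
    · exact ⟨Or.inr ⟨h1, le_of_lt h2⟩, fun he => by rw [he] at h2; omega⟩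
  · rintro ⟨h | ⟨h1, h2⟩, hne⟩
    · exact Or.inl h
    · refine Or.inr ⟨h1, lt_of_le_of_ne h2 ?_⟩
      intro he
      exact hne (Prod.ext h1 he.symm)

instance : DecidableRel rcLE := fun _ _ => by unfold rcLE; infer_instance

instance : IsTrans (ℕ × ℕ) rcLE := ⟨by rintro a b c (h|⟨h1,h2⟩) (g|⟨g1,g2⟩) <;> unfold rcLE <;> omega⟩

instance : IsAntisymm (ℕ × ℕ) rcLE :=
  ⟨by rintro a b (h|⟨h1,h2⟩) (g|⟨g1,g2⟩) <;> [skip;skip;skip;exact Prod.ext h1 (by omega)] <;> omega⟩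

instance : IsTotal (ℕ × ℕ) rcLE := ⟨by intro a b; unfold rcLE; omega⟩

instance : IsTrans (ℕ × ℕ) rcLT := ⟨by rintro a b c (h|⟨h1,h2⟩) (g|⟨g1,g2⟩) <;> unfold rcLT <;> omega⟩

/-- the canonical listing of a finite set of crosses. -/
noncomputable def readL (R : Finset (ℕ × ℕ)) : List (ℕ × ℕ) := R.sort rcLE

lemma readL_isReading (R : Finset (ℕ × ℕ)) : IsRCReading R (readL R) := by
  refine ⟨Finset.sort_toFinset _ _, ?_⟩
  refine List.isChain_iff_pairwise.mpr ?_
  have hs : (readL R).Pairwise rcLE := Finset.pairwise_sort R rcLE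
  have hn : (readL R).Nodup := Finset.sort_nodup R rcLE
  rw [List.pairwise_iff_getElem] at hs ⊢
  intro i j hi hj hij
  rw [rcLT_iff]
  refine ⟨hs i j hi hj hij, ?_⟩
  intro he
  rw [List.Nodup.getElem_inj_iff hn] at he
  omega

lemma reading_unique {R : Finset (ℕ × ℕ)} {L : List (ℕ × ℕ)} (h : IsRCReading R L) :
    L = readL R := by
  have hpair : L.Pairwise rcLT := List.isChain_iff_pairwise.mp h.2
  have hnodup : L.Nodup := hpair.imp (fun hab => (rcLT_iff.mp hab).2)
  have hsorted : L.Pairwise rcLE := hpair.imp (fun hab => (rcLT_iff.mp hab).1)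
  have hperm : List.Perm L (readL R) :=
    List.perm_of_nodup_nodup_toFinset_eq hnodup (Finset.sort_nodup R rcLE)
      (by rw [h.1]; exact (Finset.sort_toFinset _ _).symm)
  exact List.Perm.eq_of_pairwise' hsorted (Finset.pairwise_sort R rcLE) hperm

end Aux16

namespace Aux16

lemma suf_split (A : List ℕ) {j k : ℕ} (hjk : j ≤ k) :
    suf A j = wordProd ((A.drop j).take (k - j)) * suf A k := by
  unfold suf
  rw [← wordProd_append]
  congr 1
  have h2 : A.drop k = List.drop (k - j) (A.drop j) := by
    rw [List.drop_drop]
    congr 1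
    omega
  rw [h2]
  exact (List.take_append_drop _ _).symm

lemma mem_slice {A : List ℕ} {j k b : ℕ} (hb : b ∈ (A.drop j).take (k - j)) :
    ∃ t, j ≤ t ∧ t < k ∧ t < A.length ∧ A.getD t 0 = b := by
  rw [List.mem_iff_getElem] at hb
  obtain ⟨i, hi, hbi⟩ := hb
  have h1 : i < k - j ∧ j + i < A.length := by
    simp only [List.length_take, List.length_drop, lt_min_iff] at hi
    omega
  refine ⟨j + i, by omega, by omega, h1.2, ?_⟩
  rw [← hbi, List.getElem_take, List.getElem_drop, List.getD_eq_getElem _ _ h1.2]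

section RowLemmas

variable {L : List (ℕ × ℕ)}

lemma rcWord_length : (rcWord L).length = L.length := List.length_map _

lemma rcWord_getD {k : ℕ} (h : k < L.length) :
    (rcWord L).getD k 0 = (L.getD k (0,0)).1 + (L.getD k (0,0)).2 - 1 := by
  unfold rcWord
  rw [List.getD_eq_getElem _ _ (by rw [List.length_map]; exact h),
    List.getD_eq_getElem _ _ h, List.getElem_map]

lemma getD_mem {k : ℕ} (h : k < L.length) : L.getD k (0,0) ∈ L := by
  rw [List.getD_eq_getElem _ _ h]; exact List.getElem_mem _

variable (hpair : L.Pairwise rcLT) (hcoord : ∀ p ∈ L, 1 ≤ p.1 ∧ 1 ≤ p.2)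

include hcoord in
lemma letter_arith {k : ℕ} (h : k < L.length) :
    (rcWord L).getD k 0 + 1 = (L.getD k (0,0)).1 + (L.getD k (0,0)).2 := by
  obtain ⟨h1, h2⟩ := hcoord _ (getD_mem h)
  rw [rcWord_getD h]
  omega

include hpair in
lemma pair_getD {i j : ℕ} (hij : i < j) (hj : j < L.length) :
    rcLT (L.getD i (0,0)) (L.getD j (0,0)) := by
  rw [List.getD_eq_getElem _ _ (hij.trans hj), List.getD_eq_getElem _ _ hj]
  exact List.pairwise_iff_getElem.mp hpair i j (hij.trans hj) hj hij

include hpair in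
lemma row_mono {i j : ℕ} (hij : i ≤ j) (hj : j < L.length) :
    (L.getD i (0,0)).1 ≤ (L.getD j (0,0)).1 := by
  rcases eq_or_lt_of_le hij with rfl | h
  · exact le_rfl
  · rcases pair_getD hpair h hj with h' | ⟨h', _⟩
    · exact le_of_lt h'
    · omega

include hpair hcoord in
lemma same_row_letter {i j : ℕ} (hij : i < j) (hj : j < L.length)
    (hrow : (L.getD i (0,0)).1 = (L.getD j (0,0)).1) :
    (rcWord L).getD j 0 < (rcWord L).getD i 0 := by
  rcases pair_getD hpair hij hj with h' | ⟨_, h'⟩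
  · omega
  · have h1 := letter_arith hcoord (hij.trans hj)
    have h2 := letter_arith hcoord hj
    omega

include hpair hcoord in
lemma suffix_letter_ge {k t : ℕ} (hk : k < L.length) (ht : t < L.length) (hkt : k ≤ t) :
    (L.getD k (0,0)).1 ≤ (rcWord L).getD t 0 := by
  have h1 := row_mono hpair hkt ht
  have h2 := letter_arith hcoord ht
  have h3 := (hcoord _ (getD_mem ht)).2
  omega

include hpair hcoord in
lemma suf_fix_small {k t x : ℕ} (hk : k < L.length) (hx : x < (L.getD k (0,0)).1)
    (hkt : k ≤ t) : suf (rcWord L) t x = x := by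
  apply wordProd_fix
  intro a ha
  rw [List.mem_iff_getElem] at ha
  obtain ⟨i, hi, hai⟩ := ha
  have hlen : t + i < L.length := by
    have := hi
    simp only [List.length_drop, rcWord_length] at this
    omega
  have : a = (rcWord L).getD (t + i) 0 := by
    rw [← hai, List.getElem_drop, List.getD_eq_getElem _ _ (by rw [rcWord_length]; exact hlen)]
  rw [this]
  exact lt_of_lt_of_le hx (suffix_letter_ge hpair hcoord hk hlen (by omega))

include hpair hcoord in
lemma row_bound_of_event {k p q : ℕ} (e : EvAt (rcWord L) k p q) :
    (L.getD k (0,0)).1 ≤ p ∧ (L.getD k (0,0)).1 ≤ q := by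
  obtain ⟨hk, h1, h2⟩ := e
  rw [rcWord_length] at hk
  constructor
  · by_contra hp
    push_neg at hp
    rw [suf_fix_small hpair hcoord hk hp (Nat.le_succ k)] at h1
    have := suffix_letter_ge hpair hcoord hk hk le_rfl
    omega
  · by_contra hq
    push_neg at hq
    rw [suf_fix_small hpair hcoord hk hq (Nat.le_succ k)] at h2
    have := suffix_letter_ge hpair hcoord hk hk le_rfl
    omega

include hpair hcoord in
lemma slice_letters {k₂ k₁ t : ℕ} (hlt : k₂ < k₁) (hk₁ : k₁ < L.length)
    (hrow : (L.getD k₂ (0,0)).1 = (L.getD k₁ (0,0)).1)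
    (ht2 : k₂ < t) (ht1 : t < k₁) :
    (rcWord L).getD k₁ 0 < (rcWord L).getD t 0 ∧
      (rcWord L).getD t 0 < (rcWord L).getD k₂ 0 := by
  have htrow : (L.getD t (0,0)).1 = (L.getD k₁ (0,0)).1 := by
    have h1 := row_mono hpair (le_of_lt ht2) (ht1.trans hk₁)
    have h2 := row_mono hpair (le_of_lt ht1) hk₁
    omega
  constructor
  · exact same_row_letter hpair hcoord ht1 hk₁ htrow
  · exact same_row_letter hpair hcoord ht2 (ht1.trans hk₁) (by omega)

include hpair hcoord in
/-- no second (descending-for-`z`) crossing to the left of a crossing in the same row -/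
lemma same_row_LA {k₂ k₁ z : ℕ} (hlt : k₂ < k₁) (hk₁ : k₁ < L.length)
    (hrow : (L.getD k₂ (0,0)).1 = (L.getD k₁ (0,0)).1)
    (h₂ : suf (rcWord L) (k₂+1) z = (rcWord L).getD k₂ 0 ∨
          suf (rcWord L) (k₂+1) z = (rcWord L).getD k₂ 0 + 1)
    (h₁ : suf (rcWord L) (k₁+1) z = (rcWord L).getD k₁ 0 + 1) : False := by
  have hk₁' : k₁ < (rcWord L).length := by rw [rcWord_length]; exact hk₁
  have ha12 : (rcWord L).getD k₁ 0 < (rcWord L).getD k₂ 0 :=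
    same_row_letter hpair hcoord hlt hk₁ hrow
  have hy1 : suf (rcWord L) k₁ z = (rcWord L).getD k₁ 0 := by
    rw [suf_succ hk₁', Equiv.Perm.mul_apply, h₁, sTrans_right]
  have hsplit := suf_split (rcWord L) (j := k₂ + 1) (k := k₁) (by omega)
  have hval : suf (rcWord L) (k₂+1) z = (rcWord L).getD k₁ 0 := by
    rw [hsplit, Equiv.Perm.mul_apply, hy1]
    apply wordProd_fix
    intro b hb
    obtain ⟨t, ht1, ht2, _, hbt⟩ := mem_slice hb
    rw [← hbt]
    exact (slice_letters hpair hcoord hlt hk₁ hrow (by omega) ht2).1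
  omega

include hpair hcoord in
/-- an ascending-for-`z` crossing to the right of a descending one in the same row -/
lemma same_row_LB {k₂ k₁ z : ℕ} (hlt : k₂ < k₁) (hk₁ : k₁ < L.length)
    (hrow : (L.getD k₂ (0,0)).1 = (L.getD k₁ (0,0)).1)
    (h₂ : suf (rcWord L) (k₂+1) z = (rcWord L).getD k₂ 0 + 1)
    (h₁ : suf (rcWord L) (k₁+1) z = (rcWord L).getD k₁ 0) : False := by
  have hk₁' : k₁ < (rcWord L).length := by rw [rcWord_length]; exact hk₁
  have ha12 : (rcWord L).getD k₁ 0 < (rcWord L).getD k₂ 0 :=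
    same_row_letter hpair hcoord hlt hk₁ hrow
  have hy1 : suf (rcWord L) k₁ z = (rcWord L).getD k₁ 0 + 1 := by
    rw [suf_succ hk₁', Equiv.Perm.mul_apply, h₁, sTrans_left]
  have hsplit := suf_split (rcWord L) (j := k₂ + 1) (k := k₁) (by omega)
  have hval : suf (rcWord L) (k₂+1) z ≤ (rcWord L).getD k₂ 0 := by
    rw [hsplit, Equiv.Perm.mul_apply, hy1]
    apply wordProd_le
    · intro b hb
      obtain ⟨t, ht1, ht2, _, hbt⟩ := mem_slice hb
      have := (slice_letters hpair hcoord hlt hk₁ hrow (by omega) ht2).2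
      omega
    · omega
  omega

end RowLemmas

end Aux16

/-- Let `w ∈ Sₙ`, `w ≠ w₀`, and let `r = min { i : w_i < w_{i+1} }` (so `w_1 > ⋯ > w_r <
w_{r+1}`).  Then every rc-graph `R` for `w s_r` contains the cross `(r, w_r)`, and
`R \ {(r, w_r)}` is an rc-graph for `w`. -/
theorem stmt16 (n : ℕ) (w : Equiv.Perm ℕ) (hw : IsPermOn n w)
    (r : ℕ) (hr1 : 1 ≤ r) (hrn : r + 1 ≤ n)
    (hdesc : w r < w (r + 1))
    (hmin : ∀ i, 1 ≤ i → i < r → w (i + 1) < w i) :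
    ∀ R : Finset (ℕ × ℕ), IsRCGraph n (w * sTrans r) R →
      (r, w r) ∈ R ∧ IsRCGraph n w (R.erase (r, w r)) := by
  classical
  intro R hR
  set v := w * sTrans r with hv
  -- basic facts about the values of w and v
  have hw0 : w 0 = 0 := by
    by_contra h
    have := hw 0 h
    omega
  have hwr1 : 1 ≤ w r := by
    rcases Nat.eq_zero_or_pos (w r) with h | h
    · exfalso
      have h2 : w r = w 0 := by rw [h, hw0]
      have := w.injective h2
      omega
    · exact h
  have hwrn : w r ≤ n := by
    by_contra h
    push_neg at h
    have h1 : w (w r) = w r := by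
      by_contra h2
      have := hw (w r) h2
      omega
    have := w.injective h1
    omega
  have hvr1 : v (r+1) = w r := by
    rw [hv, Equiv.Perm.mul_apply, Aux16.sTrans_right]
  have hvr : v r = w (r+1) := by
    rw [hv, Equiv.Perm.mul_apply, Aux16.sTrans_left]
  have hvp : ∀ p, p ≠ r → p ≠ r+1 → v p = w p := fun p h1 h2 => by
    rw [hv, Equiv.Perm.mul_apply, Aux16.sTrans_ne h1 h2]
  have hv0 : v 0 = 0 := by rw [hvp 0 (by omega) (by omega), hw0]
  have hchain : ∀ p, 1 ≤ p → p < r → w r < w p := by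
    have key : ∀ d p, 1 ≤ p → 1 ≤ d → p + d = r → w r < w p := by
      intro d
      induction d with
      | zero => intro p _ h _; omega
      | succ d ih =>
          intro p hp _ hpd
          rcases Nat.eq_zero_or_pos d with rfl | hd'
          · have h1 := hmin p hp (by omega)
            have h2 : p + 1 = r := by omega
            rw [h2] at h1
            exact h1
          · have h1 := ih (p+1) (by omega) hd' (by omega)
            have h2 := hmin p hp (by omega)
            omega
    intro p h1 h2
    exact key (r - p) p h1 (by omega) (by omega)
  have hinv : ∀ p, 1 ≤ p → p ≤ r → v (r+1) < v p := by
    intro p h1 h2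
    rcases eq_or_lt_of_le h2 with rfl | h3
    · rw [hvr1, hvr]; exact hdesc
    · rw [hvr1, hvp p (by omega) (by omega)]
      exact hchain p h1 h3
  -- the canonical reading L and its word A
  set L := Aux16.readL R with hLdef
  have hRead := Aux16.readL_isReading R
  have hred : IsReducedWordFor v (rcWord L) := hR.2 L hRead
  set A := rcWord L with hAdef
  have hpair : L.Pairwise rcLT := List.isChain_iff_pairwise.mp hRead.2
  have hmemR : ∀ p ∈ L, p ∈ R := fun p hp => by
    rw [← hRead.1]; exact List.mem_toFinset.mpr hp
  have hcoord : ∀ p ∈ L, 1 ≤ p.1 ∧ 1 ≤ p.2 := fun p hp =>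
    ⟨(hR.1 p (hmemR p hp)).1, (hR.1 p (hmemR p hp)).2.1⟩
  have hAlen : A.length = L.length := Aux16.rcWord_length
  have hone : Aux16.suf A A.length = 1 := Aux16.suf_ge le_rfl
  have hprod : Aux16.suf A 0 = v := hred.2.1
  -- existence of a crossing for each inversion (p, r+1), 1 ≤ p ≤ r
  have hex : ∀ p, 1 ≤ p → p ≤ r → ∃ k, Aux16.EvAt A k p (r+1) := by
    intro p h1 h2
    have h3 : Aux16.suf A A.length p < Aux16.suf A A.length (r+1) := by
      rw [hone]
      simp only [Equiv.Perm.one_apply]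
      omega
    have h4 : ¬ Aux16.suf A 0 p < Aux16.suf A 0 (r+1) := by
      rw [hprod]
      have := hinv p h1 h2
      omega
    obtain ⟨k, _, _, he⟩ := Aux16.exists_event (Nat.zero_le _) h3 h4
    exact ⟨k, he⟩
  have hex' : ∀ p, ∃ k, 1 ≤ p → p ≤ r → Aux16.EvAt A k p (r+1) := by
    intro p
    by_cases h : 1 ≤ p ∧ p ≤ r
    · obtain ⟨k, hk⟩ := hex p h.1 h.2
      exact ⟨k, fun _ _ => hk⟩
    · exact ⟨0, fun h1 h2 => absurd ⟨h1, h2⟩ h⟩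
  choose kf hkf using hex'
  -- the row of the chosen crossing
  set f : ℕ → ℕ := fun p => (L.getD (kf p) (0,0)).1 with hfdef
  have hkflt : ∀ p, 1 ≤ p → p ≤ r → kf p < L.length := by
    intro p h1 h2
    have := (hkf p h1 h2).1
    omega
  have hfbound : ∀ p, 1 ≤ p → p ≤ r → 1 ≤ f p ∧ f p ≤ p := by
    intro p h1 h2
    refine ⟨(hcoord _ (Aux16.getD_mem (hkflt p h1 h2))).1, ?_⟩
    exact (Aux16.row_bound_of_event hpair hcoord (hkf p h1 h2)).1
  have hdownkf : ∀ p, 1 ≤ p → p ≤ r →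
      Aux16.suf A (kf p + 1) (r+1) = A.getD (kf p) 0 + 1 := fun p h1 h2 => (hkf p h1 h2).2.2
  -- injectivity of the row function
  have hfinj : ∀ p, 1 ≤ p → p ≤ r → ∀ p', 1 ≤ p' → p' ≤ r → f p = f p' → p = p' := by
    intro p h1 h2 p' h1' h2' hff
    by_contra hne
    have hkne : kf p ≠ kf p' := by
      intro he
      have e1 := (hkf p h1 h2).2.1
      have e2 := (hkf p' h1' h2').2.1
      rw [he] at e1
      exact hne ((Aux16.suf A (kf p' + 1)).injective (e1.trans e2.symm))
    rcases lt_or_gt_of_ne hkne with hlt | hgt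
    · exact Aux16.same_row_LA hpair hcoord hlt (hkflt p' h1' h2') hff
        (Or.inr (hdownkf p h1 h2)) (hdownkf p' h1' h2')
    · exact Aux16.same_row_LA hpair hcoord hgt (hkflt p h1 h2) hff.symm
        (Or.inr (hdownkf p' h1' h2')) (hdownkf p h1 h2)
  -- image of rows
  have himg : ∀ s, s ≤ r → Finset.image f (Finset.Icc 1 s) = Finset.Icc 1 s := by
    intro s hs
    apply Finset.eq_of_subset_of_card_le
    · intro x hx
      rw [Finset.mem_image] at hx
      obtain ⟨p, hp, rfl⟩ := hx
      rw [Finset.mem_Icc] at hp ⊢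
      have := hfbound p hp.1 (hp.2.trans hs)
      omega
    · have hinj' : Set.InjOn f (Finset.Icc 1 s) := by
        intro p hp p' hp' hff
        rw [Finset.coe_Icc, Set.mem_Icc] at hp hp'
        exact hfinj p hp.1 (hp.2.trans hs) p' hp'.1 (hp'.2.trans hs) hff
      rw [Finset.card_image_of_injOn hinj']
  have hfr : f r = r := by
    by_contra hne
    have h1 := hfbound r hr1 le_rfl
    have h2 : f r ∈ Finset.Icc 1 (r-1) := Finset.mem_Icc.mpr ⟨h1.1, by omega⟩
    rw [← himg (r-1) (by omega)] at h2
    obtain ⟨p, hp, hfp⟩ := Finset.mem_image.mp h2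
    rw [Finset.mem_Icc] at hp
    have := hfinj p hp.1 (by omega) r hr1 le_rfl hfp
    omega
  have hsurj : ∀ i, 1 ≤ i → i ≤ r → ∃ p, 1 ≤ p ∧ p ≤ r ∧ f p = i := by
    intro i h1 h2
    have : i ∈ Finset.image f (Finset.Icc 1 r) := by
      rw [himg r le_rfl]
      exact Finset.mem_Icc.mpr ⟨h1, h2⟩
    obtain ⟨p, hp, hfp⟩ := Finset.mem_image.mp this
    rw [Finset.mem_Icc] at hp
    exact ⟨p, hp.1, hp.2, hfp⟩
  -- the crossing of (r, r+1)
  set ks := kf r with hksdef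
  have hEstar : Aux16.EvAt A ks r (r+1) := hkf r hr1 le_rfl
  have hkslt : ks < L.length := hkflt r hr1 le_rfl
  have hrowks : (L.getD ks (0,0)).1 = r := hfr
  -- no descending crossing of the strand r+1 after ks
  have hnodown : ∀ k, ks < k → k < A.length →
      Aux16.suf A (k+1) (r+1) ≠ A.getD k 0 + 1 := by
    intro k hk1 hk2 hdown
    have hxval : Aux16.suf A (k+1) ((Aux16.suf A (k+1)).symm (A.getD k 0)) = A.getD k 0 :=
      Equiv.apply_symm_apply _ _
    set x := (Aux16.suf A (k+1)).symm (A.getD k 0) with hxdef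
    have hxne : x ≠ r + 1 := by
      intro h
      rw [h, hdown] at hxval
      omega
    have hE : Aux16.EvAt A k x (r+1) := ⟨hk2, hxval, hdown⟩
    have hrowle := Aux16.row_bound_of_event hpair hcoord hE
    have hrowge : r ≤ (L.getD k (0,0)).1 := by
      have := Aux16.row_mono hpair (le_of_lt hk1) (by omega)
      omega
    rcases eq_or_lt_of_le hrowle.2 with heq | hlt
    · -- row = r+1 : then x > r+1 and the pair {x, r+1} crosses twice
      have hxgt : r + 1 < x := by
        have := hrowle.1
        omega
      have h3 : Aux16.suf A A.length (r+1) < Aux16.suf A A.length x := by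
        rw [hone]
        simp only [Equiv.Perm.one_apply]
        omega
      have h4 : ¬ Aux16.suf A (k+1) (r+1) < Aux16.suf A (k+1) x := by
        rw [hdown, hxval]
        omega
      obtain ⟨k', hk'1, _, hE'⟩ := Aux16.exists_event (by omega) h3 h4
      exact Aux16.no_double_event hred (show k < k' by omega) (Or.inl hE) (Or.inr hE')
    · -- row = r : two descending crossings in row r
      have hrowk : (L.getD k (0,0)).1 = r := by omega
      have hksne : ks ≠ k := by omega
      exact Aux16.same_row_LA hpair hcoord hk1 (by omega)
        (by rw [hrowks, hrowk]) (Or.inr hEstar.2.2) hdown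
  -- ascending crossings of the strand r+1 : they are after ks, in row r+1,
  -- and pair with some x > r+1 which is an inversion
  have hup : ∀ k, k < A.length → Aux16.suf A (k+1) (r+1) = A.getD k 0 →
      ks < k ∧ r + 1 < (Aux16.suf A (k+1)).symm (A.getD k 0 + 1) ∧
        v ((Aux16.suf A (k+1)).symm (A.getD k 0 + 1)) < v (r+1) := by
    intro k hk hupk
    have hxval : Aux16.suf A (k+1) ((Aux16.suf A (k+1)).symm (A.getD k 0 + 1)) = A.getD k 0 + 1 :=
      Equiv.apply_symm_apply _ _
    set x := (Aux16.suf A (k+1)).symm (A.getD k 0 + 1) with hxdef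
    have hxne : x ≠ r + 1 := by
      intro h
      rw [h, hupk] at hxval
      omega
    have hE : Aux16.EvAt A k (r+1) x := ⟨hk, hupk, hxval⟩
    have hrowle := Aux16.row_bound_of_event hpair hcoord hE
    have hrow : (L.getD k (0,0)).1 = r + 1 := by
      by_contra hrne
      have hrler : (L.getD k (0,0)).1 ≤ r := by omega
      have hrge1 : 1 ≤ (L.getD k (0,0)).1 := (hcoord _ (Aux16.getD_mem (by omega))).1
      obtain ⟨p, hp1, hp2, hfp⟩ := hsurj _ hrge1 hrler
      have hdp := hdownkf p hp1 hp2
      rcases lt_trichotomy (kf p) k with hlt | heq | hgt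
      · exact Aux16.same_row_LB hpair hcoord hlt (by omega) hfp hdp hupk
      · rw [heq, hupk] at hdp
        omega
      · exact Aux16.same_row_LA hpair hcoord hgt (hkflt p hp1 hp2) hfp.symm
          (Or.inl hupk) hdp
    have hkgt : ks < k := by
      by_contra h
      push_neg at h
      have := Aux16.row_mono hpair h hkslt
      omega
    refine ⟨hkgt, by have := hrowle.2; omega, ?_⟩
    by_contra hcon
    push_neg at hcon
    have hflip := Aux16.event_flip hE
    have h3 : Aux16.suf A k x < Aux16.suf A k (r+1) := by
      rw [hflip.1, hflip.2]
      omega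
    have h4 : ¬ Aux16.suf A 0 x < Aux16.suf A 0 (r+1) := by
      rw [hprod]
      omega
    obtain ⟨k'', _, hk''2, hE''⟩ := Aux16.exists_event (Nat.zero_le k) h3 h4
    exact Aux16.no_double_event hred hk''2 (Or.inl hE'') (Or.inr hE)
  -- the counting: value of the strand r+1 just before ks
  set Upred : ℕ → Prop := fun k => k < A.length ∧ Aux16.suf A (k+1) (r+1) = A.getD k 0
    with hUdef
  have htel : ∀ d k, ks + 1 ≤ k → k + d = A.length →
      Aux16.suf A k (r+1) = (r+1) + ((Finset.Ico k A.length).filter Upred).card := by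
    intro d
    induction d with
    | zero =>
        intro k _ h2
        have hk : k = A.length := by omega
        subst hk
        rw [hone]
        simp
    | succ d ih =>
        intro k h1 h2
        have hk : k < A.length := by omega
        have ihk := ih (k+1) (by omega) (by omega)
        have hstep : Aux16.suf A k (r+1) = sTrans (A.getD k 0) (Aux16.suf A (k+1) (r+1)) := by
          rw [Aux16.suf_succ hk, Equiv.Perm.mul_apply]
        have hIco : Finset.Ico k A.length = insert k (Finset.Ico (k+1) A.length) :=
          (Finset.insert_Ico_succ_left_eq_Ico hk).symm
        have hknot : k ∉ Finset.Ico (k+1) A.length := by simp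
        by_cases hU : Aux16.suf A (k+1) (r+1) = A.getD k 0
        · have hUk : Upred k := ⟨hk, hU⟩
          rw [hIco, Finset.filter_insert, if_pos hUk,
            Finset.card_insert_of_notMem (fun hc => hknot (Finset.mem_of_mem_filter k hc))]
          have e1 : Aux16.suf A k (r+1) = A.getD k 0 + 1 := by
            rw [hstep, hU, Aux16.sTrans_left]
          rw [hU] at ihk
          omega
        · have hD := hnodown k (by omega) hk
          have hUk : ¬ Upred k := fun hc => hU hc.2
          rw [hIco, Finset.filter_insert, if_neg hUk]
          rw [hstep, Aux16.sTrans_ne hU hD, ihk]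
  have hyk1 : Aux16.suf A (ks + 1) (r+1) =
      (r+1) + ((Finset.Ico (ks+1) A.length).filter Upred).card :=
    htel (A.length - (ks+1)) (ks+1) le_rfl (by omega)
  -- the number of ascending crossings is w r - 1
  have hcard : ((Finset.Ico (ks+1) A.length).filter Upred).card = w r - 1 := by
    have hIccCard : (Finset.Icc 1 (w r - 1)).card = w r - 1 := by
      rw [Nat.card_Icc]
      omega
    rw [← hIccCard]
    apply Finset.card_bij (i := fun k _ => v ((Aux16.suf A (k+1)).symm (A.getD k 0 + 1)))
    · intro k hk
      rw [Finset.mem_filter, Finset.mem_Ico] at hk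
      obtain ⟨⟨_, hk2⟩, hk3, hup2⟩ := hk
      obtain ⟨_, hxgt, hvx⟩ := hup k hk3 hup2
      rw [Finset.mem_Icc]
      set x := (Aux16.suf A (k+1)).symm (A.getD k 0 + 1)
      constructor
      · by_contra hc
        push_neg at hc
        have hx0 : v x = 0 := by omega
        have : x = 0 := v.injective (by rw [hx0, hv0])
        omega
      · rw [hvr1] at hvx
        omega
    · intro k hk k' hk' heq
      rw [Finset.mem_filter, Finset.mem_Ico] at hk hk'
      have hxeq := v.injective heq
      by_contra hne
      have hE : Aux16.EvAt A k (r+1) ((Aux16.suf A (k+1)).symm (A.getD k 0 + 1)) :=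
        ⟨hk.1.2, hk.2.2, Equiv.apply_symm_apply _ _⟩
      have hE' : Aux16.EvAt A k' (r+1) ((Aux16.suf A (k'+1)).symm (A.getD k' 0 + 1)) :=
        ⟨hk'.1.2, hk'.2.2, Equiv.apply_symm_apply _ _⟩
      rw [← hxeq] at hE'
      rcases lt_or_gt_of_ne hne with hlt | hgt
      · exact Aux16.no_double_event hred hlt (Or.inl hE) (Or.inl hE')
      · exact Aux16.no_double_event hred hgt (Or.inl hE') (Or.inl hE)
    · intro c hc
      rw [Finset.mem_Icc] at hc
      set x := v.symm c with hxdef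
      have hvx : v x = c := Equiv.apply_symm_apply _ _
      have hx0 : x ≠ 0 := by
        intro h
        rw [h, hv0] at hvx
        omega
      have hxgt : r + 1 < x := by
        by_contra h
        push_neg at h
        rcases eq_or_lt_of_le h with heq | hlt
        · rw [heq, hvr1] at hvx
          omega
        · have := hinv x (by omega) (by omega)
          rw [hvx, hvr1] at this
          omega
      have h3 : Aux16.suf A A.length (r+1) < Aux16.suf A A.length x := by
        rw [hone]
        simp only [Equiv.Perm.one_apply]
        omega
      have h4 : ¬ Aux16.suf A 0 (r+1) < Aux16.suf A 0 x := by
        rw [hprod, hvx, hvr1]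
        omega
      obtain ⟨k, _, hk2, hE⟩ := Aux16.exists_event (Nat.zero_le _) h3 h4
      have hksk := (hup k hk2 hE.2.1).1
      refine ⟨k, ?_, ?_⟩
      · rw [Finset.mem_filter, Finset.mem_Ico]
        exact ⟨⟨by omega, hk2⟩, hk2, hE.2.1⟩
      · have : (Aux16.suf A (k+1)).symm (A.getD k 0 + 1) = x :=
          (Equiv.symm_apply_eq _).mpr hE.2.2.symm
        rw [this, hvx]
  -- identify the cross at position ks
  have hcol : (L.getD ks (0,0)).2 = w r := by
    have e1 : Aux16.suf A (ks+1) (r+1) = A.getD ks 0 + 1 := hEstar.2.2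
    have e2 := Aux16.letter_arith hcoord hkslt
    rw [hyk1, hcard] at e1
    rw [hrowks] at e2
    have e3 : (rcWord L).getD ks 0 = A.getD ks 0 := rfl
    omega
  have hgetks : L.getD ks (0,0) = (r, w r) := Prod.ext hrowks hcol
  have hmemks : (r, w r) ∈ R := by
    rw [← hgetks]
    exact hmemR _ (Aux16.getD_mem hkslt)
  refine ⟨hmemks, ?_, ?_⟩
  · intro p hp
    exact hR.1 p (Finset.mem_of_mem_erase hp)
  · -- the erased reading
    intro L'' hL''
    set L' := L.eraseIdx ks with hL'def
    have hsplitL : L.take ks ++ (r, w r) :: L.drop (ks+1) = L := by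
      rw [← hgetks, List.getD_eq_getElem _ _ hkslt, ← List.drop_eq_getElem_cons hkslt,
        List.take_append_drop]
    have hperm : List.Perm L ((r, w r) :: L') := by
      rw [hL'def, List.eraseIdx_eq_take_drop_succ]
      conv_lhs => rw [← hsplitL]
      exact List.perm_middle
    have hnodupL : L.Nodup := hpair.imp (fun hab => (Aux16.rcLT_iff.mp hab).2)
    have hnodupC := hperm.nodup hnodupL
    rw [List.nodup_cons] at hnodupC
    have htoF : L'.toFinset = R.erase (r, w r) := by
      ext a
      rw [List.mem_toFinset, Finset.mem_erase]
      constructor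
      · intro ha
        refine ⟨fun he => hnodupC.1 (he ▸ ha), ?_⟩
        exact hmemR a (hperm.mem_iff.mpr (List.mem_cons_of_mem _ ha))
      · rintro ⟨hne, haR⟩
        have haL : a ∈ L := by
          rw [← List.mem_toFinset, hRead.1]
          exact haR
        rcases List.mem_cons.mp (hperm.mem_iff.mp haL) with he | h
        · exact absurd he hne
        · exact h
    have hchain' : L'.Chain' rcLT :=
      List.isChain_iff_pairwise.mpr (hpair.sublist (List.eraseIdx_sublist L ks))
    have hRead' : IsRCReading (R.erase (r, w r)) L' := ⟨htoF, hchain'⟩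
    have hL''eq : L'' = L' := by
      rw [Aux16.reading_unique hL'', Aux16.reading_unique hRead']
    rw [hL''eq]
    have hrcW' : rcWord L' = A.eraseIdx ks := by
      rw [hL'def, hAdef]
      unfold rcWord
      rw [List.eraseIdx_eq_take_drop_succ, List.eraseIdx_eq_take_drop_succ,
        List.map_append, List.map_take, List.map_drop]
    have hprodW : wordProd (A.eraseIdx ks) = w := by
      have hswap := Aux16.event_swap hEstar
      rw [Aux16.wordProd_eraseIdx hEstar.1 (Equiv.swap_mul_self _ _) hswap, hred.2.1, hv]
      show w * sTrans r * sTrans r = w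
      rw [mul_assoc]
      show w * (Equiv.swap r (r+1) * Equiv.swap r (r+1)) = w
      rw [Equiv.swap_mul_self, mul_one]
    refine ⟨?_, ?_, ?_⟩
    · intro a ha
      rw [hrcW'] at ha
      exact hred.1 a ((List.eraseIdx_sublist A ks).subset ha)
    · rw [hrcW']
      exact hprodW
    · intro M hM1 hM2
      have hMr : wordProd (M ++ [r]) = v := by
        rw [Aux16.wordProd_append, hM2]
        have : wordProd [r] = sTrans r := by
          rw [show ([r] : List ℕ) = r :: [] from rfl, Aux16.wordProd_cons, Aux16.wordProd_nil,
            mul_one]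
        rw [this, hv]
      have hlen2 := hred.2.2 (M ++ [r]) (by
        intro a ha
        rcases List.mem_append.mp ha with h | h
        · exact hM1 a h
        · rw [List.mem_singleton] at h
          omega) hMr
      rw [hrcW', Aux16.length_eraseIdx' A ks hEstar.1]
      rw [List.length_append, List.length_singleton] at hlen2
      have : A.length ≤ M.length + 1 := hlen2
      have hkslt' : ks < A.length := hEstar.1
      omega
end

section
/- Let u and v be strictly decreasing words (columns) of lengths s and t over ℤ_{>0}. Then there is at most one pair of columns (u', v') of lengths s+1 and t-1 such that the concatenation u'v' is Knuth equivalent to the concatenation uv. -/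
/-- An elementary Knuth transformation: `… i k j … ~ … k i j …` for `i ≤ j < k`, and
`… j i k … ~ … j k i …` for `i < j ≤ k`. -/
inductive KnuthStep : List ℕ → List ℕ → Prop
  | k1 (a b : List ℕ) (i j k : ℕ) (h1 : i ≤ j) (h2 : j < k) :
      KnuthStep (a ++ [i, k, j] ++ b) (a ++ [k, i, j] ++ b)
  | k2 (a b : List ℕ) (i j k : ℕ) (h1 : i < j) (h2 : j ≤ k) :
      KnuthStep (a ++ [j, i, k] ++ b) (a ++ [j, k, i] ++ b)

/-- Knuth (plactic) equivalence: the reflexive-symmetric-transitive closure of the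
elementary Knuth transformations. -/
def KnuthEquiv : List ℕ → List ℕ → Prop := Relation.EqvGen KnuthStep

/-- Length of the longest strictly decreasing subsequence. -/
def d1 (w : List ℕ) : ℕ :=
  ((w.sublists.filter fun l => decide (l.Pairwise (· > ·))).map List.length).foldr max 0

lemma le_foldr_max {a : ℕ} {L : List ℕ} (h : a ∈ L) : a ≤ L.foldr max 0 := by
  induction L with
  | nil => simp at h
  | cons b t ih =>
    rcases List.mem_cons.1 h with h | h
    · simp [h, le_max_iff]
    · simp only [List.foldr_cons, le_max_iff]
      exact Or.inr (ih h)

lemma foldr_max_cases (L : List ℕ) : L.foldr max 0 = 0 ∨ L.foldr max 0 ∈ L := by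
  induction L with
  | nil => simp
  | cons b t ih =>
    simp only [List.foldr_cons]
    rcases le_or_gt b (t.foldr max 0) with h | h
    · rw [max_eq_right h]
      rcases ih with h0 | hm
      · exact Or.inl h0
      · exact Or.inr (List.mem_cons_of_mem _ hm)
    · rw [max_eq_left h.le]
      exact Or.inr List.mem_cons_self

lemma le_d1 {l w : List ℕ} (h : l.Sublist w) (hp : l.Pairwise (· > ·)) :
    l.length ≤ d1 w := by
  apply le_foldr_max
  simp only [List.mem_map]
  exact ⟨l, by simp [List.mem_filter, List.mem_sublists, h, hp], rfl⟩

lemma d1_spec (w : List ℕ) :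
    ∃ l : List ℕ, l.Sublist w ∧ l.Pairwise (· > ·) ∧ l.length = d1 w := by
  have h := foldr_max_cases ((w.sublists.filter fun l => decide (l.Pairwise (· > ·))).map List.length)
  rcases h with h | h
  · exact ⟨[], List.nil_sublist _, List.Pairwise.nil, h.symm⟩
  · simp only [List.mem_map, List.mem_filter, List.mem_sublists, decide_eq_true_eq] at h
    obtain ⟨l, ⟨hs, hp⟩, hl⟩ := h
    exact ⟨l, hs, hp, hl⟩

lemma d1_mono {w w' : List ℕ} (h : w.Sublist w') : d1 w ≤ d1 w' := by
  obtain ⟨l, hs, hp, hl⟩ := d1_spec w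
  exact hl ▸ le_d1 (hs.trans h) hp

/-- Appending a strictly smaller element increases `d1` by one. -/
lemma d1_append_min {w : List ℕ} {x : ℕ} (h : ∀ y ∈ w, x < y) :
    d1 (w ++ [x]) = d1 w + 1 := by
  apply le_antisymm
  · obtain ⟨l, hs, hp, hl⟩ := d1_spec (w ++ [x])
    rw [← hl]
    rcases List.sublist_append_iff.1 hs with ⟨l₁, l₂, rfl, h1, h2⟩
    have : l₂.length ≤ 1 := h2.length_le
    have h1' : l₁.length ≤ d1 w := le_d1 h1 (hp.sublist (List.sublist_append_left _ _))
    simp only [List.length_append]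
    omega
  · obtain ⟨l, hs, hp, hl⟩ := d1_spec w
    have : (l ++ [x]).length ≤ d1 (w ++ [x]) := by
      apply le_d1 (hs.append (List.Sublist.refl _))
      rw [List.pairwise_append]
      exact ⟨hp, List.pairwise_singleton _ _, fun a ha b hb => by
        simp at hb; subst hb; exact h a (hs.subset ha)⟩
    simpa [hl] using this

/-- Inserting a strictly smaller element between two blocks. -/
lemma d1_insert_min {A B : List ℕ} {x : ℕ} (hA : A.Pairwise (· > ·))
    (h : ∀ y ∈ A ++ B, x < y) :
    d1 (A ++ [x] ++ B) = max (d1 (A ++ B)) (A.length + 1) := by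
  apply le_antisymm
  · obtain ⟨l, hs, hp, hl⟩ := d1_spec (A ++ [x] ++ B)
    rw [← hl]
    rcases List.sublist_append_iff.1 hs with ⟨l', l₃, rfl, hs', h3⟩
    rcases List.sublist_append_iff.1 hs' with ⟨l₁, l₂, rfl, h1, h2⟩
    rcases List.sublist_singleton.1 h2 with rfl | rfl
    · -- doesn't use x
      have hsub : (l₁ ++ [] ++ l₃).Sublist (A ++ B) := by
        simpa using h1.append h3
      exact le_max_of_le_left (le_d1 hsub hp)
    · -- uses x : then l₃ = []
      have hl3 : l₃ = [] := by
        by_contra hne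
        obtain ⟨y, hy⟩ := List.exists_mem_of_ne_nil _ hne
        have hyx : x > y := by
          have := List.pairwise_append.1 hp
          exact this.2.2 x (by simp) y (by simp [hy])
        have : x < y := h y (List.mem_append_right _ (h3.subset hy))
        omega
      subst hl3
      have : l₁.length ≤ A.length := h1.length_le
      apply le_max_of_le_right
      simp only [List.append_nil, List.length_append, List.length_singleton]
      omega
  · apply max_le
    · apply d1_mono
      have : (A ++ B).Sublist (A ++ ([x] ++ B)) :=
        (List.Sublist.refl A).append (List.sublist_append_right _ _)
      simpa [List.append_assoc] using this
    · have hs : (A ++ [x]).Sublist (A ++ [x] ++ B) := List.sublist_append_left _ _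
      have hp : (A ++ [x]).Pairwise (· > ·) := by
        rw [List.pairwise_append]
        exact ⟨hA, List.pairwise_singleton _ _, fun a ha b hb => by
          simp at hb; subst hb; exact h a (List.mem_append_left _ ha)⟩
      simpa using le_d1 hs hp

lemma sublist_triple {m : List ℕ} {i k j : ℕ} (h : m.Sublist [i,k,j]) :
    m = [] ∨ m = [i] ∨ m = [k] ∨ m = [j] ∨ m = [i,k] ∨ m = [i,j] ∨ m = [k,j] ∨ m = [i,k,j] := by
  have := List.mem_sublists.2 h
  fin_cases this <;> simp_all

lemma mid_pairwise {l₁ m l₃ : List ℕ} {R : ℕ → ℕ → Prop}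
    (h : (l₁ ++ m ++ l₃).Pairwise R) : m.Pairwise R := by
  refine List.Pairwise.sublist ?_ h
  have : ([] ++ m ++ []).Sublist (l₁ ++ m ++ l₃) :=
    ((List.nil_sublist l₁).append (List.Sublist.refl m)).append (List.nil_sublist l₃)
  simpa using this

lemma pairwise_mid2 {l₁ l₃ : List ℕ} {x y x' y' : ℕ}
    (h : (l₁ ++ [x, y] ++ l₃).Pairwise (· > ·))
    (hx : x' ≤ x) (hy : y ≤ y') (hxy : y' < x') :
    (l₁ ++ [x', y'] ++ l₃).Pairwise (· > ·) := by
  rw [List.pairwise_append, List.pairwise_append] at h ⊢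
  obtain ⟨⟨hp1, hpxy, c1⟩, hp3, c2⟩ := h
  refine ⟨⟨hp1, ?_, ?_⟩, hp3, ?_⟩
  · exact List.pairwise_cons.2 ⟨fun q hq => by simp at hq; omega, by simp⟩
  · intro p hp q hq
    have hpx := c1 p hp x (by simp)
    simp only [List.mem_cons, List.mem_singleton] at hq
    rcases hq with rfl | hq
    · omega
    · simp at hq; omega
  · intro p hp q hq
    have h2 := c2 x (List.mem_append_right _ (by simp)) q hq
    have h3 := c2 y (List.mem_append_right _ (by simp)) q hq
    rcases List.mem_append.1 hp with hp | hp
    · exact c2 p (List.mem_append_left _ hp) q hq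
    · simp only [List.mem_cons, List.mem_singleton] at hp
      rcases hp with rfl | hp
      · omega
      · simp at hp; omega

lemma d1_le_swap {a b L R : List ℕ}
    (hrepl : ∀ l₁ m l₃ : List ℕ, m.Sublist L → l₁.Sublist a → l₃.Sublist b →
      (l₁ ++ m ++ l₃).Pairwise (· > ·) →
      ∃ m', m'.Sublist R ∧ m.length ≤ m'.length ∧ (l₁ ++ m' ++ l₃).Pairwise (· > ·)) :
    d1 (a ++ L ++ b) ≤ d1 (a ++ R ++ b) := by
  obtain ⟨l, hs, hp, hl⟩ := d1_spec (a ++ L ++ b)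
  rw [← hl]
  rcases List.sublist_append_iff.1 hs with ⟨l', l₃, rfl, hs', h3⟩
  rcases List.sublist_append_iff.1 hs' with ⟨l₁, m, rfl, h1, h2⟩
  obtain ⟨m', hm'R, hlen, hpw⟩ := hrepl l₁ m l₃ h2 h1 h3 hp
  have hsub : (l₁ ++ m' ++ l₃).Sublist (a ++ R ++ b) := (h1.append hm'R).append h3
  have := le_d1 hsub hpw
  simp only [List.length_append] at this ⊢
  omega

lemma d1_knuthStep {w w' : List ℕ} (h : KnuthStep w w') : d1 w = d1 w' := by
  rcases h with ⟨a, b, i, j, k, h1, h2⟩ | ⟨a, b, i, j, k, h1, h2⟩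
  · apply le_antisymm
    · apply d1_le_swap
      intro l₁ m l₃ hm ha hb hpw
      rcases sublist_triple hm with rfl | rfl | rfl | rfl | rfl | rfl | rfl | rfl
      · exact ⟨[], by simp, le_refl _, hpw⟩
      · exact ⟨[i], by simp [List.sublist_cons_iff], le_refl _, hpw⟩
      · exact ⟨[k], by simp [List.sublist_cons_iff], le_refl _, hpw⟩
      · exact ⟨[j], by simp [List.sublist_cons_iff], le_refl _, hpw⟩
      · have := mid_pairwise hpw; simp at this; omega
      · have := mid_pairwise hpw; simp at this; omega
      · exact ⟨[k,j], by simp [List.sublist_cons_iff], le_refl _, hpw⟩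
      · have := mid_pairwise hpw; simp at this; omega
    · apply d1_le_swap
      intro l₁ m l₃ hm ha hb hpw
      rcases sublist_triple hm with rfl | rfl | rfl | rfl | rfl | rfl | rfl | rfl
      · exact ⟨[], by simp, le_refl _, hpw⟩
      · exact ⟨[k], by simp [List.sublist_cons_iff], le_refl _, hpw⟩
      · exact ⟨[i], by simp [List.sublist_cons_iff], le_refl _, hpw⟩
      · exact ⟨[j], by simp [List.sublist_cons_iff], le_refl _, hpw⟩
      · -- [k,i] → [k,j]
        exact ⟨[k,j], by simp [List.sublist_cons_iff], le_refl _,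
          pairwise_mid2 hpw (le_refl k) h1 h2⟩
      · exact ⟨[k,j], by simp [List.sublist_cons_iff], le_refl _, hpw⟩
      · have := mid_pairwise hpw; simp at this; omega
      · have := mid_pairwise hpw; simp at this; omega
  · apply le_antisymm
    · apply d1_le_swap
      intro l₁ m l₃ hm ha hb hpw
      rcases sublist_triple hm with rfl | rfl | rfl | rfl | rfl | rfl | rfl | rfl
      · exact ⟨[], by simp, le_refl _, hpw⟩
      · exact ⟨[j], by simp [List.sublist_cons_iff], le_refl _, hpw⟩
      · exact ⟨[i], by simp [List.sublist_cons_iff], le_refl _, hpw⟩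
      · exact ⟨[k], by simp [List.sublist_cons_iff], le_refl _, hpw⟩
      · exact ⟨[j,i], by simp [List.sublist_cons_iff], le_refl _, hpw⟩
      · have := mid_pairwise hpw; simp at this; omega
      · have := mid_pairwise hpw; simp at this; omega
      · have := mid_pairwise hpw; simp at this; omega
    · apply d1_le_swap
      intro l₁ m l₃ hm ha hb hpw
      rcases sublist_triple hm with rfl | rfl | rfl | rfl | rfl | rfl | rfl | rfl
      · exact ⟨[], by simp, le_refl _, hpw⟩
      · exact ⟨[j], by simp [List.sublist_cons_iff], le_refl _, hpw⟩
      · exact ⟨[k], by simp [List.sublist_cons_iff], le_refl _, hpw⟩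
      · exact ⟨[i], by simp [List.sublist_cons_iff], le_refl _, hpw⟩
      · have := mid_pairwise hpw; simp at this; omega
      · exact ⟨[j,i], by simp [List.sublist_cons_iff], le_refl _, hpw⟩
      · -- [k,i] → [j,i]
        exact ⟨[j,i], by simp [List.sublist_cons_iff], le_refl _,
          pairwise_mid2 hpw h2 (le_refl i) h1⟩
      · have := mid_pairwise hpw; simp at this; omega

def cge (m : ℕ) : ℕ → Bool := fun x => decide (m ≤ x)
@[simp] lemma cge_iff {m x : ℕ} : cge m x = true ↔ m ≤ x := by simp [cge]

lemma knuthStep_perm {w w' : List ℕ} (h : KnuthStep w w') : w.Perm w' := by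
  rcases h with ⟨a, b, i, j, k, h1, h2⟩ | ⟨a, b, i, j, k, h1, h2⟩
  · simpa [List.append_assoc] using ((List.Perm.swap k i [j]).append_right b).append_left a
  · simpa [List.append_assoc] using (((List.Perm.swap k i []).cons j).append_right b).append_left a

lemma knuthEquiv_perm {w w' : List ℕ} (h : KnuthEquiv w w') : w.Perm w' := by
  induction h with
  | rel _ _ h => exact knuthStep_perm h
  | refl => exact List.Perm.refl _
  | symm _ _ _ ih => exact ih.symm
  | trans _ _ _ _ _ ih1 ih2 => exact ih1.trans ih2

lemma filter_knuthStep {w w' : List ℕ} (m : ℕ) (h : KnuthStep w w') :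
    KnuthEquiv (w.filter (cge m)) (w'.filter (cge m)) := by
  rcases h with ⟨a, b, i, j, k, h1, h2⟩ | ⟨a, b, i, j, k, h1, h2⟩
  · simp only [List.filter_append]
    by_cases hi : m ≤ i
    · have hj : m ≤ j := le_trans hi h1
      have hk : m ≤ k := le_trans hj h2.le
      have e1 : [i, k, j].filter (cge m) = [i, k, j] := by simp [List.filter, hi, hj, hk, cge]
      have e2 : [k, i, j].filter (cge m) = [k, i, j] := by simp [List.filter, hi, hj, hk, cge]
      rw [e1, e2]
      exact Relation.EqvGen.rel _ _ (KnuthStep.k1 _ _ i j k h1 h2)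
    · by_cases hj : m ≤ j
      · have hk : m ≤ k := le_trans hj h2.le
        have e1 : [i, k, j].filter (cge m) = [k, j] := by simp [List.filter, hi, hj, hk, cge]
        have e2 : [k, i, j].filter (cge m) = [k, j] := by simp [List.filter, hi, hj, hk, cge]
        rw [e1, e2]; exact Relation.EqvGen.refl _
      · by_cases hk : m ≤ k
        · have e1 : [i, k, j].filter (cge m) = [k] := by simp [List.filter, hi, hj, hk, cge]
          have e2 : [k, i, j].filter (cge m) = [k] := by simp [List.filter, hi, hj, hk, cge]
          rw [e1, e2]; exact Relation.EqvGen.refl _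
        · have e1 : [i, k, j].filter (cge m) = [] := by simp [List.filter, hi, hj, hk, cge]
          have e2 : [k, i, j].filter (cge m) = [] := by simp [List.filter, hi, hj, hk, cge]
          rw [e1, e2]; exact Relation.EqvGen.refl _
  · simp only [List.filter_append]
    by_cases hi : m ≤ i
    · have hj : m ≤ j := le_trans hi h1.le
      have hk : m ≤ k := le_trans hj h2
      have e1 : [j, i, k].filter (cge m) = [j, i, k] := by simp [List.filter, hi, hj, hk, cge]
      have e2 : [j, k, i].filter (cge m) = [j, k, i] := by simp [List.filter, hi, hj, hk, cge]
      rw [e1, e2]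
      exact Relation.EqvGen.rel _ _ (KnuthStep.k2 _ _ i j k h1 h2)
    · by_cases hj : m ≤ j
      · have hk : m ≤ k := le_trans hj h2
        have e1 : [j, i, k].filter (cge m) = [j, k] := by simp [List.filter, hi, hj, hk, cge]
        have e2 : [j, k, i].filter (cge m) = [j, k] := by simp [List.filter, hi, hj, hk, cge]
        rw [e1, e2]; exact Relation.EqvGen.refl _
      · by_cases hk : m ≤ k
        · have e1 : [j, i, k].filter (cge m) = [k] := by simp [List.filter, hi, hj, hk, cge]
          have e2 : [j, k, i].filter (cge m) = [k] := by simp [List.filter, hi, hj, hk, cge]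
          rw [e1, e2]; exact Relation.EqvGen.refl _
        · have e1 : [j, i, k].filter (cge m) = [] := by simp [List.filter, hi, hj, hk, cge]
          have e2 : [j, k, i].filter (cge m) = [] := by simp [List.filter, hi, hj, hk, cge]
          rw [e1, e2]; exact Relation.EqvGen.refl _

lemma d1_knuthEquiv {w w' : List ℕ} (h : KnuthEquiv w w') : d1 w = d1 w' := by
  induction h with
  | rel _ _ h => exact d1_knuthStep h
  | refl => rfl
  | symm _ _ _ ih => exact ih.symm
  | trans _ _ _ _ _ ih1 ih2 => exact ih1.trans ih2

lemma d1_filter_knuthEquiv {w w' : List ℕ} (m : ℕ) (h : KnuthEquiv w w') :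
    d1 (w.filter (cge m)) = d1 (w'.filter (cge m)) := by
  induction h with
  | rel _ _ h => exact d1_knuthEquiv (filter_knuthStep m h)
  | refl => rfl
  | symm _ _ _ ih => exact ih.symm
  | trans _ _ _ _ _ ih1 ih2 => exact ih1.trans ih2

/-- count of elements `≥ m`. -/
def cnt (m : ℕ) (l : List ℕ) : ℕ := (l.filter (cge m)).length

lemma cnt_succ (m : ℕ) (l : List ℕ) : cnt m l = cnt (m + 1) l + l.count m := by
  induction l with
  | nil => simp [cnt]
  | cons a t ih =>
    simp only [cnt, List.filter_cons, List.count_cons] at *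
    by_cases h1 : m ≤ a <;> by_cases h2 : m + 1 ≤ a <;> by_cases h3 : a = m
    all_goals first | omega |
      (have e1 : cge m a = (decide (m ≤ a)) := rfl
       have e2 : cge (m+1) a = (decide (m+1 ≤ a)) := rfl
       simp [e1, e2, h1, h2, h3, List.length_cons] <;> omega)

lemma cnt_zero_of_big {l : List ℕ} {m : ℕ} (h : ∀ x ∈ l, x < m) : cnt m l = 0 := by
  simp only [cnt, List.length_eq_zero_iff, List.filter_eq_nil_iff]
  intro x hx
  simp only [cge_iff]
  exact fun hc => absurd (h x hx) (by omega)

lemma cnt_zero_all {l : List ℕ} : cnt 0 l = l.length := by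
  simp only [cnt]
  rw [List.filter_eq_self.2]
  intro x _; simp

lemma count_le_one_of_pairwise {l : List ℕ} (hp : l.Pairwise (· > ·)) (b : ℕ) :
    l.count b ≤ 1 := by
  have : l.Nodup := hp.imp (fun h => Nat.ne_of_gt h)
  exact List.nodup_iff_count_le_one.1 this b

lemma col_skip {l : List ℕ} {b : ℕ} (hc : l.count b = 0) :
    l.filter (cge b) = l.filter (cge (b + 1)) := by
  apply List.filter_congr
  intro x hx
  have hne : x ≠ b := by
    intro rfl'; subst rfl'; exact absurd hx (List.count_eq_zero.1 hc)
  simp only [cge, decide_eq_decide]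
  omega

lemma col_split {l : List ℕ} {b : ℕ} (hp : l.Pairwise (· > ·)) (hc : l.count b = 1) :
    l.filter (cge b) = l.filter (cge (b + 1)) ++ [b] := by
  induction l with
  | nil => simp at hc
  | cons a t ih =>
    have hpt := (List.pairwise_cons.1 hp).2
    have hlt := (List.pairwise_cons.1 hp).1
    by_cases hab : a = b
    · subst hab
      have hct : t.count a = 0 := by
        simp only [List.count_cons] at hc; simp at hc; omega
      have hte : t.filter (cge a) = [] := by
        rw [List.filter_eq_nil_iff]
        intro x hx; simp only [cge_iff]
        have := hlt x hx; omega
      have hte2 : t.filter (cge (a + 1)) = [] := by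
        rw [List.filter_eq_nil_iff]
        intro x hx; simp only [cge_iff]
        have := hlt x hx; omega
      simp [List.filter_cons, hte, hte2, cge]
    · have hca : t.count b = 1 := by
        simp only [List.count_cons] at hc
        simp [hab] at hc; omega
      have := ih hpt hca
      simp only [List.filter_cons]
      by_cases h1 : b ≤ a
      · have h2 : b + 1 ≤ a := by omega
        simp [cge, h1, h2, this]
      · have h2 : ¬ (b + 1 ≤ a) := by omega
        simp [cge, h1, h2, this]

lemma cols_eq {A₁ A₂ : List ℕ} (h1 : A₁.Pairwise (· > ·)) (h2 : A₂.Pairwise (· > ·))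
    (h : ∀ m, cnt m A₁ = cnt m A₂) : A₁ = A₂ := by
  haveI : IsAntisymm ℕ (· > ·) := ⟨fun a b hab hba => absurd hba (by omega)⟩
  have hperm : A₁.Perm A₂ := by
    rw [List.perm_iff_count]
    intro x
    have e1 := cnt_succ x A₁
    have e2 := cnt_succ x A₂
    have := h x; have := h (x + 1)
    omega
  exact List.Perm.eq_of_pairwise' h1 h2 hperm

lemma mem_filter_big {l : List ℕ} {b x : ℕ} (hx : x ∈ l.filter (cge (b + 1))) : b < x := by
  have := List.of_mem_filter hx
  simp only [cge_iff] at this; omega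

/-- Core contradiction: at a level `b` where the counts agree but disagree one level up. -/
lemma core {A₁ B₁ A₂ B₂ : List ℕ}
    (hA₁ : A₁.Pairwise (· > ·)) (hB₁ : B₁.Pairwise (· > ·))
    (hA₂ : A₂.Pairwise (· > ·)) (hB₂ : B₂.Pairwise (· > ·))
    (hN : ∀ m, cnt m A₁ + cnt m B₁ = cnt m A₂ + cnt m B₂)
    (hd : ∀ m, d1 ((A₁ ++ B₁).filter (cge m)) = d1 ((A₂ ++ B₂).filter (cge m)))
    {b : ℕ}
    (h0 : cnt b A₁ = cnt b A₂) (h1 : cnt (b + 1) A₁ = cnt (b + 1) A₂ + 1) : False := by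
  have cA1 := cnt_succ b A₁
  have cA2 := cnt_succ b A₂
  have cB1 := cnt_succ b B₁
  have cB2 := cnt_succ b B₂
  have lA1 := count_le_one_of_pairwise hA₁ b
  have lA2 := count_le_one_of_pairwise hA₂ b
  have lB1 := count_le_one_of_pairwise hB₁ b
  have lB2 := count_le_one_of_pairwise hB₂ b
  have hNb := hN b
  have hNb1 := hN (b + 1)
  -- letter b is in B₁ and in A₂, not in A₁ nor B₂
  have hxA1 : A₁.count b = 0 := by omega
  have hxA2 : A₂.count b = 1 := by omega
  have hxB1 : B₁.count b = 1 := by omega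
  have hxB2 : B₂.count b = 0 := by omega
  -- structure of the filtered words
  have e1 : (A₁ ++ B₁).filter (cge b) = ((A₁ ++ B₁).filter (cge (b + 1))) ++ [b] := by
    rw [List.filter_append, List.filter_append, col_skip hxA1, col_split hB₁ hxB1,
      List.append_assoc]
  have e2 : (A₂ ++ B₂).filter (cge b) = (A₂.filter (cge (b + 1)) ++ [b]) ++ B₂.filter (cge (b + 1)) := by
    rw [List.filter_append, col_split hA₂ hxA2, col_skip hxB2]
  have d1e : d1 ((A₁ ++ B₁).filter (cge b)) = d1 ((A₁ ++ B₁).filter (cge (b + 1))) + 1 := by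
    rw [e1]; exact d1_append_min (fun y hy => mem_filter_big hy)
  have d2e : d1 ((A₂ ++ B₂).filter (cge b))
      = max (d1 ((A₂ ++ B₂).filter (cge (b + 1)))) (cnt (b + 1) A₂ + 1) := by
    rw [e2]
    have := d1_insert_min (A := A₂.filter (cge (b + 1))) (B := B₂.filter (cge (b + 1)))
      (x := b) (hA₂.sublist List.filter_sublist) ?_
    · rw [this, ← List.filter_append]; rfl
    · intro y hy
      rcases List.mem_append.1 hy with hy | hy
      · exact mem_filter_big hy
      · exact mem_filter_big hy
  -- the first column at level b+1 is a decreasing subsequence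
  have hle : cnt (b + 1) A₁ ≤ d1 ((A₁ ++ B₁).filter (cge (b + 1))) := by
    apply le_d1 _ (hA₁.sublist List.filter_sublist)
    rw [List.filter_append]
    exact List.sublist_append_left _ _
  have hdb := hd b
  have hdb1 := hd (b + 1)
  rw [d1e, d2e, ← hdb1] at hdb
  rcases max_cases (d1 ((A₁ ++ B₁).filter (cge (b + 1)))) (cnt (b + 1) A₂ + 1) with ⟨h, _⟩ | ⟨h, _⟩ <;>
    omega

lemma le_foldr_max' {a : ℕ} {L : List ℕ} (h : a ∈ L) : a ≤ L.foldr max 0 := by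
  induction L with
  | nil => simp at h
  | cons b t ih =>
    rcases List.mem_cons.1 h with h | h
    · simp [h, le_max_iff]
    · simp only [List.foldr_cons, le_max_iff]
      exact Or.inr (ih h)

lemma col_unique {A₁ B₁ A₂ B₂ : List ℕ}
    (hA₁ : A₁.Pairwise (· > ·)) (hB₁ : B₁.Pairwise (· > ·))
    (hA₂ : A₂.Pairwise (· > ·)) (hB₂ : B₂.Pairwise (· > ·))
    (hN : ∀ m, cnt m A₁ + cnt m B₁ = cnt m A₂ + cnt m B₂)
    (hd : ∀ m, d1 ((A₁ ++ B₁).filter (cge m)) = d1 ((A₂ ++ B₂).filter (cge m)))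
    (hlen : A₁.length = A₂.length) : A₁ = A₂ ∧ B₁ = B₂ := by
  suffices hAc : ∀ m, cnt m A₁ = cnt m A₂ by
    refine ⟨cols_eq hA₁ hA₂ hAc, cols_eq hB₁ hB₂ fun m => ?_⟩
    have := hN m; have := hAc m; omega
  by_contra hc
  push_neg at hc
  obtain ⟨m, hm⟩ := hc
  set T := (A₁ ++ B₁ ++ A₂ ++ B₂).foldr max 0 + 1 with hT
  have hbig : ∀ m', T ≤ m' → cnt m' A₁ = cnt m' A₂ := by
    intro m' hm'
    have z1 : cnt m' A₁ = 0 := cnt_zero_of_big fun x hx => by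
      have : x ≤ T - 1 := le_foldr_max' (by simp [hx])
      omega
    have z2 : cnt m' A₂ = 0 := cnt_zero_of_big fun x hx => by
      have : x ≤ T - 1 := le_foldr_max' (by simp [hx])
      omega
    omega
  have hQ0 : cnt 0 A₁ = cnt 0 A₂ := by rw [cnt_zero_all, cnt_zero_all, hlen]
  have hmT : m ≤ T := by
    by_contra hmt
    exact hm (hbig m (by omega))
  set P : ℕ → Prop := fun n => cnt n A₁ ≠ cnt n A₂ with hP
  set m₀ := Nat.findGreatest P T with hm₀
  have hPm₀ : P m₀ := Nat.findGreatest_spec hmT hm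
  have hm₀pos : 1 ≤ m₀ := by
    rcases Nat.eq_zero_or_pos m₀ with h | h
    · rw [h] at hPm₀; exact absurd hQ0 hPm₀
    · exact h
  set Q : ℕ → Prop := fun n => cnt n A₁ = cnt n A₂ with hQ
  set b := Nat.findGreatest Q (m₀ - 1) with hb
  have hQb : Q b := Nat.findGreatest_spec (Nat.zero_le _) hQ0
  have hble : b ≤ m₀ - 1 := Nat.findGreatest_le _
  have hQb1 : ¬ Q (b + 1) := by
    rcases lt_or_ge (b + 1) m₀ with h | h
    · exact Nat.findGreatest_is_greatest (n := m₀ - 1) (by omega) (by omega)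
    · have hbm : b + 1 = m₀ := by omega
      rw [hbm]; exact hPm₀
  have s1 := cnt_succ b A₁
  have s2 := cnt_succ b A₂
  have c1 := count_le_one_of_pairwise hA₁ b
  have c2 := count_le_one_of_pairwise hA₂ b
  have hQb' : cnt b A₁ = cnt b A₂ := hQb
  have hQb1' : cnt (b + 1) A₁ ≠ cnt (b + 1) A₂ := hQb1
  rcases (by omega : cnt (b + 1) A₁ = cnt (b + 1) A₂ + 1 ∨ cnt (b + 1) A₂ = cnt (b + 1) A₁ + 1) with h | h
  · exact core hA₁ hB₁ hA₂ hB₂ hN hd hQb' h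
  · exact core hA₂ hB₂ hA₁ hB₁ (fun m => (hN m).symm) (fun m => (hd m).symm) hQb'.symm h

/-- Let `u`, `v` be columns (strictly decreasing words over `ℤ_{>0}`) of lengths `s` and
`t`.  There is at most one pair of columns `(u', v')` of lengths `s+1` and `t-1` whose
concatenation `u'v'` is Knuth equivalent to `uv`. -/
theorem stmt17 (u v : List ℕ) (hu : u.Chain' (· > ·)) (hv : v.Chain' (· > ·))
    (hupos : ∀ a ∈ u, 1 ≤ a) (hvpos : ∀ a ∈ v, 1 ≤ a) :
    ∀ u₁ v₁ u₂ v₂ : List ℕ,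
      u₁.Chain' (· > ·) → v₁.Chain' (· > ·) → u₂.Chain' (· > ·) → v₂.Chain' (· > ·) →
      u₁.length = u.length + 1 → v₁.length + 1 = v.length →
      u₂.length = u.length + 1 → v₂.length + 1 = v.length →
      KnuthEquiv (u₁ ++ v₁) (u ++ v) → KnuthEquiv (u₂ ++ v₂) (u ++ v) →
      u₁ = u₂ ∧ v₁ = v₂ := by
  intro u₁ v₁ u₂ v₂ hc1 hc2 hc3 hc4 hl1 hl2 hl3 hl4 he1 he2
  have he : KnuthEquiv (u₁ ++ v₁) (u₂ ++ v₂) :=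
    Relation.EqvGen.trans _ _ _ he1 (Relation.EqvGen.symm _ _ he2)
  have hperm : (u₁ ++ v₁).Perm (u₂ ++ v₂) := knuthEquiv_perm he
  have hN : ∀ m, cnt m u₁ + cnt m v₁ = cnt m u₂ + cnt m v₂ := by
    intro m
    have := (hperm.filter (cge m)).length_eq
    simpa [cnt, List.filter_append] using this
  have hd : ∀ m, d1 ((u₁ ++ v₁).filter (cge m)) = d1 ((u₂ ++ v₂).filter (cge m)) :=
    fun m => d1_filter_knuthEquiv m he
  haveI : IsTrans ℕ (· > ·) := ⟨fun a b c h1 h2 => lt_trans h2 h1⟩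
  exact col_unique (List.isChain_iff_pairwise.1 hc1) (List.isChain_iff_pairwise.1 hc2)
    (List.isChain_iff_pairwise.1 hc3) (List.isChain_iff_pairwise.1 hc4) hN hd (by omega)
end

section
/- Let v be a word all of whose letters are strictly greater than i, and let (j..i) denote the word j (j-1) ⋯ i for j ≥ i. Then applying the composite operator φ_{(j..i)} := j·σ_j ∘ (j-1)·σ_{j-1} ∘ ⋯ ∘ i·σ_i in the sense of the plactification recursion (i.e., φ((j..i) v) when defined) produces the word obtained from (the image of) v by subtracting 1 from each letter in {i+1, ..., j+1} while leaving the other letters unchanged; in particular, the resulting word contains no letter j+1. -/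
/-- The height function of the `r`-parenthesization of the word `u`: letters `r+1` are left
parentheses, letters `r` are right parentheses; `ht r u p` is the number of `(r+1)`'s minus
the number of `r`'s among the first `p` letters. -/
def ht (r : ℕ) (u : List ℕ) (p : ℕ) : ℤ :=
  ((u.take p).count (r + 1) : ℤ) - ((u.take p).count r : ℤ)

/-- Position `q` of `u` holds a letter `r` which is unpaired in the `r`-pairing
(an unmatched right parenthesis: it creates a new minimum of the height function). -/
def UnpairedLow (r : ℕ) (u : List ℕ) (q : ℕ) : Prop :=
  q < u.length ∧ u.getD q 0 = r ∧ ∀ p ≤ q, ht r u (q + 1) < ht r u p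

/-- Position `p` of `u` holds a letter `r+1` which is unpaired in the `r`-pairing
(an unmatched left parenthesis: the height function never returns to its level). -/
def UnpairedHigh (r : ℕ) (u : List ℕ) (p : ℕ) : Prop :=
  p < u.length ∧ u.getD p 0 = r + 1 ∧ ∀ q ≤ u.length, p < q → ht r u p < ht r u q

instance (r : ℕ) (u : List ℕ) (q : ℕ) : Decidable (UnpairedLow r u q) := by
  unfold UnpairedLow; infer_instance

instance (r : ℕ) (u : List ℕ) (p : ℕ) : Decidable (UnpairedHigh r u p) := by
  unfold UnpairedHigh; infer_instance

/-- The position of the rightmost unpaired `r`, if any. -/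
def fIndex (r : ℕ) (u : List ℕ) : Option ℕ :=
  ((List.range u.length).filter (fun q => decide (UnpairedLow r u q))).getLast?

/-- The coplactic operator `f_r`: change the rightmost unpaired `r` to `r+1`
(`none` plays the role of the empty word `∅`). -/
def fOp (r : ℕ) (u : List ℕ) : Option (List ℕ) :=
  (fIndex r u).map (fun q => u.set q (r + 1))

/-- The position of the leftmost unpaired `r+1`, if any. -/
def eIndex (r : ℕ) (u : List ℕ) : Option ℕ :=
  ((List.range u.length).filter (fun p => decide (UnpairedHigh r u p))).head?

/-- The coplactic operator `e_r`: change the leftmost unpaired `r+1` to `r`. -/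
def eOp (r : ℕ) (u : List ℕ) : Option (List ℕ) :=
  (eIndex r u).map (fun p => u.set p r)

/-- The operator `σ_r`: replace the unpaired subword `r^s (r+1)^t` by `r^t (r+1)^s`
(all other letters, and all paired `r`'s and `(r+1)`'s, stay in place). -/
def sigmaOp (r : ℕ) (u : List ℕ) : List ℕ :=
  let ups := (List.range u.length).filter
    (fun p => decide (UnpairedLow r u p ∨ UnpairedHigh r u p))
  let t := (ups.filter (fun p => u.getD p 0 == r + 1)).length
  (List.range u.length).map (fun p =>
    if p ∈ ups then (if ups.idxOf p < t then r else r + 1) else u.getD p 0)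

/-- The decreasing consecutive word `(j..i) = j (j-1) ⋯ i`. -/
def descWord (j i : ℕ) : List ℕ := (List.range (j + 1 - i)).map (fun k => j - k)

/-- The operator `φ_u : v ↦ u_1 σ_{u_1}( u_2 σ_{u_2}( ⋯ u_n σ_{u_n}(v) ⋯ ))` occurring in
the recursion for the plactification map (each letter of `u` is prepended and the
corresponding `σ` is applied). -/
def phiOp : List ℕ → List ℕ → List ℕ
  | [], v => v
  | r :: u, v => r :: sigmaOp r (phiOp u v)

lemma count_take_eq_zero {r : ℕ} {w : List ℕ} (hr : r ∉ w) (p : ℕ) :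
    (w.take p).count r = 0 :=
  List.count_eq_zero.mpr (fun h => hr ((List.take_subset _ _) h))

lemma ht_of_not_mem {r : ℕ} {w : List ℕ} (hr : r ∉ w) (p : ℕ) :
    ht r w p = ((w.take p).count (r + 1) : ℤ) := by
  unfold ht; rw [count_take_eq_zero hr]; simp

lemma high_iff {r : ℕ} {w : List ℕ} (hr : r ∉ w) {p : ℕ} (hp : p < w.length) :
    UnpairedHigh r w p ↔ w.getD p 0 = r + 1 := by
  constructor
  · exact fun h => h.2.1
  · intro he
    refine ⟨hp, he, fun q hq hpq => ?_⟩
    rw [ht_of_not_mem hr, ht_of_not_mem hr]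
    have h1 : (w.take p).count (r + 1) < (w.take (p + 1)).count (r + 1) := by
      rw [List.take_succ]
      have hgp : w[p]? = some (r + 1) := by
        rw [List.getElem?_eq_getElem hp, ← List.getD_eq_getElem w 0 hp, he]
      simp [hgp]
    have h2 : (w.take (p + 1)).count (r + 1) ≤ (w.take q).count (r + 1) := by
      have heq : w.take (p + 1) = (w.take q).take (p + 1) := by
        rw [List.take_take, Nat.min_eq_left (by omega)]
      rw [heq]
      exact (List.take_sublist _ _).count_le _
    exact_mod_cast h1.trans_le h2

lemma sigma_of_not_mem (r : ℕ) (w : List ℕ) (hr : r ∉ w) :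
    sigmaOp r w = w.map (fun a => if a = r + 1 then r else a) := by
  have hlow : ∀ q, ¬ UnpairedLow r w q := by
    rintro q ⟨hq, he, -⟩
    apply hr
    rw [List.getD_eq_getElem w 0 hq] at he
    exact he ▸ List.getElem_mem hq
  have hfil : (List.range w.length).filter
      (fun p => decide (UnpairedLow r w p ∨ UnpairedHigh r w p))
      = (List.range w.length).filter (fun p => w.getD p 0 == r + 1) := by
    apply List.filter_congr
    intro p hp
    rw [List.mem_range] at hp
    simp only [hlow p, false_or, high_iff hr hp]
    exact (Bool.beq_eq_decide_eq _ _).symm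
  set ups := (List.range w.length).filter (fun p => w.getD p 0 == r + 1) with hups
  have hmem : ∀ p, p ∈ ups ↔ p < w.length ∧ w.getD p 0 = r + 1 := by
    intro p; simp [hups, List.mem_filter, List.mem_range]
  have hfil2 : ups.filter (fun p => w.getD p 0 == r + 1) = ups := by
    apply List.filter_eq_self.mpr
    intro p hp
    simpa using ((hmem p).mp hp).2
  show (List.range w.length).map _ = _
  rw [hfil, hfil2]
  apply List.ext_getElem
  · simp
  · intro k hk hk'
    simp only [List.length_map, List.length_range] at hk
    simp only [List.getElem_map, List.getElem_range]
    by_cases hc : w.getD k 0 = r + 1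
    · have hin : k ∈ ups := (hmem k).mpr ⟨by simpa using hk, hc⟩
      have hidx : ups.idxOf k < ups.length := List.idxOf_lt_length_iff.mpr hin
      rw [List.getD_eq_getElem w 0 (by simpa using hk)] at hc
      simp [hin, hidx, hc]
    · have hnin : k ∉ ups := fun h => hc ((hmem k).mp h).2
      rw [List.getD_eq_getElem w 0 (by simpa using hk)] at hc ⊢
      simp [hnin, hc]

lemma descWord_self (i : ℕ) : descWord i i = [i] := by
  have : i + 1 - i = 1 := by omega
  rw [descWord, this]
  rfl

lemma descWord_succ {i j : ℕ} (h : i ≤ j + 1) :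
    descWord (j + 1) i = (j + 1) :: descWord j i := by
  unfold descWord
  have h1 : j + 1 + 1 - i = (j + 1 - i) + 1 := by omega
  rw [h1, List.range_succ_eq_map]
  simp [List.map_map, Function.comp, Nat.succ_sub_succ]

lemma descWord_mem {i j a : ℕ} (h : a ∈ descWord j i) : a ≤ j := by
  simp only [descWord, List.mem_map, List.mem_range] at h
  obtain ⟨k, hk, rfl⟩ := h
  omega

lemma phi_desc (i j : ℕ) (hij : i ≤ j) (v : List ℕ) (hv : ∀ a ∈ v, i < a) :
    phiOp (descWord j i) v =
      descWord j i ++ v.map (fun a => if i + 1 ≤ a ∧ a ≤ j + 1 then a - 1 else a) ∧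
    (j + 1) ∉ phiOp (descWord j i) v := by
  induction j, hij using Nat.le_induction with
  | base =>
    rw [descWord_self]
    have hnot : i ∉ v := fun h => absurd (hv i h) (lt_irrefl i)
    have hphi : phiOp [i] v = i :: sigmaOp i v := rfl
    rw [hphi, sigma_of_not_mem i v hnot]
    constructor
    · simp only [List.cons_append, List.nil_append, List.cons.injEq, true_and]
      apply List.map_congr_left
      intro a ha
      have := hv a ha
      split_ifs <;> omega
    · simp only [List.mem_cons, List.mem_map]
      rintro (h | ⟨a, ha, h⟩)
      · omega
      · have := hv a ha
        revert h
        split_ifs <;> omega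
  | succ j hij IH =>
    obtain ⟨IH1, IH2⟩ := IH
    rw [descWord_succ (by omega)]
    have hphi : phiOp ((j + 1) :: descWord j i) v
        = (j + 1) :: sigmaOp (j + 1) (phiOp (descWord j i) v) := rfl
    rw [hphi, IH1] at *
    rw [sigma_of_not_mem (j + 1) _ IH2]
    rw [List.map_append, List.map_map]
    have hd : (descWord j i).map (fun a => if a = j + 1 + 1 then j + 1 else a)
        = descWord j i := by
      conv_rhs => rw [← List.map_id (descWord j i)]
      apply List.map_congr_left
      intro a ha
      have := descWord_mem ha
      simp only [id]
      split_ifs <;> omega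
    rw [hd]
    have hm : v.map ((fun a => if a = j + 1 + 1 then j + 1 else a) ∘
        (fun a => if i + 1 ≤ a ∧ a ≤ j + 1 then a - 1 else a))
        = v.map (fun a => if i + 1 ≤ a ∧ a ≤ j + 1 + 1 then a - 1 else a) := by
      apply List.map_congr_left
      intro a ha
      have := hv a ha
      simp only [Function.comp]
      split_ifs <;> omega
    rw [hm]
    refine ⟨rfl, ?_⟩
    simp only [List.cons_append, List.mem_cons, List.mem_append, List.mem_map]
    rintro (h | h | ⟨a, ha, h⟩)
    · omega
    · have := descWord_mem h; omega
    · have := hv a ha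
      revert h
      split_ifs <;> omega

/-- If every letter of `v` is strictly greater than `i`, then applying `φ_{(j..i)}` to `v`
subtracts `1` from each letter of `v` lying in `{i+1, …, j+1}` and leaves the other
letters unchanged; in particular the resulting word contains no letter `j+1`. -/
theorem stmt19 (i j : ℕ) (hi : 1 ≤ i) (hij : i ≤ j)
    (v : List ℕ) (hv : ∀ a ∈ v, i < a) :
    phiOp (descWord j i) v =
      phiOp (descWord j i) [] ++
        v.map (fun a => if i + 1 ≤ a ∧ a ≤ j + 1 then a - 1 else a) ∧
    (j + 1) ∉ phiOp (descWord j i) v := by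
  obtain ⟨h1, h2⟩ := phi_desc i j hij v hv
  have h0 : phiOp (descWord j i) [] = descWord j i := by
    have h := (phi_desc i j hij [] (by simp)).1
    simpa using h
  rw [h0]
  exact ⟨h1, h2⟩
end
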